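/- arXiv:1606.00738 — 3 statements merged into one kernel-verified Lean document; each statement's English description precedes it below -/
import Mathlib

section
/- For all integers 0 ≤ k ≤ N, the Kolmogorov width of the unit ball of ℓ₁^N in ℓ₂^N satisfies d_k(B₁^N, ℓ₂^N) = sqrt(1 - k/N). -/
/-!
If `P` is the orthogonal projection onto a subspace `L` of `ℓ₂^N`, the distance from the vertex
`eᵢ` of `B₁^N` to `L` is `√(1 - ‖P eᵢ‖²)`, and since `x ↦ x - P x` is linear, no point of `B₁^N`
is farther from `L` than the farthest vertex. As `∑ᵢ ‖P eᵢ‖² = tr P = dim L ≤ k`, some vertex has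
`‖P eᵢ‖² ≤ k / N`: this is the lower bound. For the upper bound, let `L` be spanned by `k`
discrete Hartley vectors `j ↦ cas (2π φ j / N)`, `cas = cos + sin`. They are orthogonal of norm
`√N`, and for a set of frequencies symmetric about `0` the sum `∑_φ cas (φ t) ^ 2` is the
constant `k`, so Bessel's inequality gives `‖P eᵢ‖² ≥ k / N` for every `i`.
-/

open Finset

/-- Kolmogorov width of a set `M` in `ℝ^N` with respect to a norm-like function `nrm`. -/
noncomputable def kolWidth (N : ℕ) (k : ℕ) (M : Set (Fin N → ℝ))
    (nrm : (Fin N → ℝ) → ℝ) : ℝ :=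
  ⨅ L : {L : Submodule ℝ (Fin N → ℝ) // Module.finrank ℝ L ≤ k},
    ⨆ x : M, ⨅ y : L.1, nrm (x.1 - y.1)

open Real

section Projection

variable {ι : Type*} [Fintype ι] [DecidableEq ι]

theorem LinearMap.norm_apply_le_sum_abs_mul {F : Type*} [SeminormedAddCommGroup F]
    [NormedSpace ℝ F] (A : EuclideanSpace ℝ ι →ₗ[ℝ] F) {r : ℝ}
    (hA : ∀ i, ‖A (EuclideanSpace.single i 1)‖ ≤ r) (x : EuclideanSpace ℝ ι) :
    ‖A x‖ ≤ (∑ i, |x i|) * r := by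
  have hx : x = ∑ i, x i • EuclideanSpace.single i 1 := by
    simpa using ((EuclideanSpace.basisFun ι ℝ).sum_repr x).symm
  calc ‖A x‖ ≤ ∑ i, ‖x i • A (EuclideanSpace.single i 1)‖ := by
        conv_lhs => rw [hx, map_sum]
        simp only [map_smul]
        exact norm_sum_le _ _
    _ ≤ ∑ i, |x i| * r := sum_le_sum fun i _ => by
        rw [norm_smul, Real.norm_eq_abs]
        exact mul_le_mul_of_nonneg_left (hA i) (abs_nonneg _)
    _ = (∑ i, |x i|) * r := (sum_mul _ _ _).symm

theorem EuclideanSpace.norm_le_sum_abs (x : EuclideanSpace ℝ ι) : ‖x‖ ≤ ∑ i, |x i| := by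
  simpa using LinearMap.id.norm_apply_le_sum_abs_mul (r := 1) (fun i => by simp) x

theorem Submodule.norm_sub_starProjection_le_norm_sub {E : Type*} [NormedAddCommGroup E]
    [InnerProductSpace ℝ E] (K : Submodule ℝ E) [K.HasOrthogonalProjection] (x : E) {y : E}
    (hy : y ∈ K) : ‖x - K.starProjection x‖ ≤ ‖x - y‖ := by
  rw [K.starProjection_minimal]
  change _ ≤ ‖x - ((⟨y, hy⟩ : K) : E)‖
  exact ciInf_le ⟨0, Set.forall_mem_range.2 fun _ => norm_nonneg _⟩ _

variable (K : Submodule ℝ (EuclideanSpace ℝ ι))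

theorem Submodule.sum_norm_starProjection_single_sq :
    ∑ i, ‖K.starProjection (EuclideanSpace.single i 1)‖ ^ 2 = Module.finrank ℝ K := by
  have hproj : LinearMap.IsProj K (K.starProjection : EuclideanSpace ℝ ι →ₗ[ℝ] _) :=
    ⟨fun x => K.starProjection_apply_mem x, fun x hx => K.starProjection_eq_self_iff.mpr hx⟩
  rw [← hproj.trace, LinearMap.trace_eq_sum_inner _ (EuclideanSpace.basisFun ι ℝ)]
  refine sum_congr rfl fun i _ => ?_
  rw [ContinuousLinearMap.coe_coe, EuclideanSpace.basisFun_apply, real_inner_comm]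
  exact (K.re_inner_starProjection_eq_normSq _).symm

theorem Submodule.norm_single_sub_starProjection_sq (i : ι) :
    ‖EuclideanSpace.single i (1 : ℝ) - K.starProjection (EuclideanSpace.single i 1)‖ ^ 2
      = 1 - ‖K.starProjection (EuclideanSpace.single i 1)‖ ^ 2 := by
  have := K.norm_sq_eq_add_norm_sq_starProjection (EuclideanSpace.single i (1 : ℝ))
  rw [K.starProjection_orthogonal] at this
  simp only [PiLp.norm_single, norm_one, one_pow, sub_apply, ContinuousLinearMap.id_apply] at this
  linarith

theorem Submodule.norm_sub_starProjection_le_sum_abs_mul {t : ℝ}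
    (ht : ∀ i, t ≤ ‖K.starProjection (EuclideanSpace.single i 1)‖ ^ 2)
    (x : EuclideanSpace ℝ ι) : ‖x - K.starProjection x‖ ≤ (∑ i, |x i|) * √(1 - t) := by
  have hA (i : ι) : ‖Kᗮ.starProjection (EuclideanSpace.single i 1)‖ ≤ √(1 - t) := by
    refine Real.le_sqrt_of_sq_le ?_
    rw [K.starProjection_orthogonal, sub_apply, ContinuousLinearMap.id_apply,
      K.norm_single_sub_starProjection_sq]
    linarith [ht i]
  simpa [K.starProjection_orthogonal] using
    Kᗮ.starProjection.toLinearMap.norm_apply_le_sum_abs_mul hA x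

theorem Submodule.exists_sqrt_le_norm_single_sub [Nonempty ι] :
    ∃ i, ∀ y ∈ K, √(1 - Module.finrank ℝ K / Fintype.card ι)
      ≤ ‖EuclideanSpace.single i (1 : ℝ) - y‖ := by
  obtain ⟨i, -, hi⟩ := exists_le_of_sum_le (s := univ) univ_nonempty
    (f := fun i => ‖K.starProjection (EuclideanSpace.single i 1)‖ ^ 2)
    (g := fun _ => (Module.finrank ℝ K : ℝ) / Fintype.card ι) (by
      rw [K.sum_norm_starProjection_single_sq]
      simp [mul_div_cancel₀, Fintype.card_ne_zero])
  refine ⟨i, fun y hy => ?_⟩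
  calc √(1 - Module.finrank ℝ K / Fintype.card ι)
      ≤ √(1 - ‖K.starProjection (EuclideanSpace.single i 1)‖ ^ 2) := sqrt_le_sqrt (by linarith)
    _ = ‖EuclideanSpace.single i (1 : ℝ) - K.starProjection (EuclideanSpace.single i 1)‖ := by
      rw [← K.norm_single_sub_starProjection_sq, sqrt_sq (norm_nonneg _)]
    _ ≤ ‖EuclideanSpace.single i (1 : ℝ) - y‖ := K.norm_sub_starProjection_le_norm_sub _ hy

end Projection

section Trig

variable {N : ℕ} {m : ℤ}

theorem sin_pi_mul_div_ne_zero (hm₀ : m ≠ 0) (hm : |m| < N) : sin (π * m / N) ≠ 0 := by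
  rw [Ne, sin_eq_zero_iff]
  rintro ⟨n, hn⟩
  have hN : 0 < N := by exact_mod_cast (abs_nonneg m).trans_lt hm
  have hmn : m = N * n := by
    field_simp at hn
    exact_mod_cast (by linarith : (m : ℝ) = N * n)
  exact hm.not_ge (Int.le_of_dvd (abs_pos.2 hm₀) ((dvd_abs _ _).2 ⟨n, hmn⟩))

theorem sin_natCast_mul_two_pi_int_div_div_two (hm : |m| < N) :
    sin (N * (2 * π * m / N) / 2) = 0 := by
  have : (N : ℝ) ≠ 0 := by
    have : 0 < N := by exact_mod_cast (abs_nonneg m).trans_lt hm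
    positivity
  rw [← sin_int_mul_pi m]
  congr 1
  field_simp

theorem sum_cos_int_mul_two_pi_div (hm : |m| < N) :
    ∑ j : Fin N, cos (m * (2 * π * j / N)) = if m = 0 then (N : ℝ) else 0 := by
  split_ifs with hm₀
  · simp [hm₀]
  have h := sin_mul_sum_cos N (2 * π * m / N) 0
  rw [sin_natCast_mul_two_pi_int_div_div_two hm, zero_mul,
    show 2 * π * m / N / 2 = π * m / N by ring] at h
  rw [Fin.sum_univ_eq_sum_range (fun j => cos (m * (2 * π * j / N))),
    ← (mul_eq_zero.1 h).resolve_left (sin_pi_mul_div_ne_zero hm₀ hm)]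
  exact sum_congr rfl fun j _ => by ring_nf

theorem sum_sin_int_mul_two_pi_div (hm : |m| < N) :
    ∑ j : Fin N, sin (m * (2 * π * j / N)) = 0 := by
  rcases eq_or_ne m 0 with rfl | hm₀
  · simp
  have h := sin_mul_sum_sin N (2 * π * m / N) 0
  rw [sin_natCast_mul_two_pi_int_div_div_two hm, zero_mul,
    show 2 * π * m / N / 2 = π * m / N by ring] at h
  rw [Fin.sum_univ_eq_sum_range (fun j => sin (m * (2 * π * j / N))),
    ← (mul_eq_zero.1 h).resolve_left (sin_pi_mul_div_ne_zero hm₀ hm)]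
  exact sum_congr rfl fun j _ => by ring_nf

end Trig

section Hartley

noncomputable def hartley (N : ℕ) (φ : ℝ) : EuclideanSpace ℝ (Fin N) :=
  WithLp.toLp 2 fun j => cos (φ * (2 * π * j / N)) + sin (φ * (2 * π * j / N))

theorem inner_hartley (N : ℕ) (φ ψ : ℝ) :
    inner ℝ (hartley N φ) (hartley N ψ) = ∑ j : Fin N, cos ((φ - ψ) * (2 * π * j / N))
      + ∑ j : Fin N, sin ((φ + ψ) * (2 * π * j / N)) := by
  rw [← sum_add_distrib, PiLp.inner_apply]
  refine sum_congr rfl fun j _ => ?_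
  simp only [hartley, RCLike.inner_apply, conj_trivial, sub_mul, add_mul, cos_sub, sin_add]
  ring

theorem hartley_apply_sq (N : ℕ) (φ : ℝ) (j : Fin N) :
    hartley N φ j ^ 2 = 1 + sin ((2 * φ) * (2 * π * j / N)) := by
  rw [mul_assoc, sin_two_mul]
  simp only [hartley]
  nlinarith [sin_sq_add_cos_sq (φ * (2 * π * j / N))]

/- Half-integers when `k` is even, so that the frequencies are symmetric about `0` while their
differences and sums are integers of absolute value `< k`. -/
noncomputable def centredFreq (k : ℕ) (f : Fin k) : ℝ := f - (k - 1) / 2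

theorem centredFreq_sub (k : ℕ) (f g : Fin k) :
    centredFreq k f - centredFreq k g = ((f - g : ℤ) : ℝ) := by
  simp [centredFreq]

theorem centredFreq_add (k : ℕ) (f g : Fin k) :
    centredFreq k f + centredFreq k g = ((f + g + 1 - k : ℤ) : ℝ) := by
  simp [centredFreq]
  ring

theorem centredFreq_rev (k : ℕ) (f : Fin k) : centredFreq k f.rev = -centredFreq k f := by
  simp only [centredFreq, Fin.val_rev]
  rw [Nat.cast_sub (by omega)]
  push_cast
  ring

theorem inner_hartley_centredFreq {N k : ℕ} (hk : k ≤ N) (f g : Fin k) :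
    inner ℝ (hartley N (centredFreq k f)) (hartley N (centredFreq k g))
      = if f = g then (N : ℝ) else 0 := by
  rw [inner_hartley, centredFreq_sub, centredFreq_add, sum_cos_int_mul_two_pi_div,
    sum_sin_int_mul_two_pi_div, add_zero]
  · simp [sub_eq_zero, Fin.val_inj]
  all_goals rw [abs_lt]; omega

theorem sum_hartley_centredFreq_apply_sq (N k : ℕ) (j : Fin N) :
    ∑ f : Fin k, hartley N (centredFreq k f) j ^ 2 = k := by
  have hodd : ∑ f : Fin k, sin ((2 * centredFreq k f) * (2 * π * j / N)) = 0 := by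
    refine neg_eq_self.1 ?_
    rw [← sum_neg_distrib, ← Equiv.sum_comp Fin.revPerm]
    simp [centredFreq_rev, ← sin_neg]
  simp only [hartley_apply_sq, sum_add_distrib, hodd]
  simp

theorem orthonormal_hartley_centredFreq {N k : ℕ} (hk : k ≤ N) :
    Orthonormal ℝ fun f : Fin k => (√N)⁻¹ • hartley N (centredFreq k f) := by
  rw [orthonormal_iff_ite]
  intro f g
  rw [inner_smul_left, inner_smul_right, inner_hartley_centredFreq hk]
  split_ifs
  · have : (0 : ℝ) < N := by exact_mod_cast f.pos.trans_le hk
    simp [← mul_assoc, ← sq, sq_sqrt this.le, this.ne']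
  · simp

theorem exists_finrank_le_forall_div_le_norm_starProjection_single_sq {N k : ℕ} (hk : k ≤ N) :
    ∃ K : Submodule ℝ (EuclideanSpace ℝ (Fin N)), Module.finrank ℝ K ≤ k ∧
      ∀ i, (k : ℝ) / N ≤ ‖K.starProjection (EuclideanSpace.single i 1)‖ ^ 2 := by
  set b := fun f : Fin k => (√N)⁻¹ • hartley N (centredFreq k f)
  refine ⟨Submodule.span ℝ (Set.range b), (finrank_range_le_card b).trans (by simp), fun i => ?_⟩
  set K := Submodule.span ℝ (Set.range b)
  have hb (f : Fin k) : inner ℝ (b f) (K.starProjection (EuclideanSpace.single i 1))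
      = (√N)⁻¹ * hartley N (centredFreq k f) i := by
    rw [← Submodule.inner_starProjection_left_eq_right,
      K.starProjection_eq_self_iff.2 (Submodule.subset_span ⟨f, rfl⟩),
      EuclideanSpace.inner_single_right]
    simp [b]
  calc (k : ℝ) / N
      = ∑ f, ‖inner ℝ (b f) (K.starProjection (EuclideanSpace.single i 1))‖ ^ 2 := by
        simp only [hb, norm_mul, mul_pow, Real.norm_eq_abs, sq_abs, inv_pow,
          sq_sqrt N.cast_nonneg]
        rw [← mul_sum, sum_hartley_centredFreq_apply_sq, inv_mul_eq_div]
    _ ≤ _ := (orthonormal_hartley_centredFreq hk).sum_inner_products_le _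

end Hartley

section KolWidth

variable {N k : ℕ} {M : Set (Fin N → ℝ)} {nrm : (Fin N → ℝ) → ℝ}

theorem kolWidth_le_of_forall_exists (hnrm : ∀ x, 0 ≤ nrm x) {r : ℝ} (hr : 0 ≤ r)
    (L : Submodule ℝ (Fin N → ℝ)) (hL : Module.finrank ℝ L ≤ k)
    (h : ∀ x ∈ M, ∃ y ∈ L, nrm (x - y) ≤ r) : kolWidth N k M nrm ≤ r := by
  refine ciInf_le_of_le ⟨0, Set.forall_mem_range.2 fun _ =>
    Real.iSup_nonneg fun _ => Real.iInf_nonneg fun _ => hnrm _⟩ ⟨L, hL⟩ ?_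
  refine Real.iSup_le (fun x => ?_) hr
  obtain ⟨y, hy, hxy⟩ := h x x.2
  exact ciInf_le_of_le ⟨0, Set.forall_mem_range.2 fun _ => hnrm _⟩ ⟨y, hy⟩ hxy

theorem le_kolWidth_of_forall_exists (hnrm : ∀ x, 0 ≤ nrm x) (hM : BddAbove (nrm '' M))
    {r : ℝ} (h : ∀ L : Submodule ℝ (Fin N → ℝ), Module.finrank ℝ L ≤ k →
      ∃ x ∈ M, ∀ y ∈ L, r ≤ nrm (x - y)) : r ≤ kolWidth N k M nrm := by
  have : Nonempty {L : Submodule ℝ (Fin N → ℝ) // Module.finrank ℝ L ≤ k} := ⟨⟨⊥, by simp⟩⟩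
  refine le_ciInf fun L => ?_
  obtain ⟨x, hx, hxL⟩ := h L.1 L.2
  obtain ⟨R, hR⟩ := hM
  have hbdd : BddAbove (Set.range fun x : M => ⨅ y : L.1, nrm (x.1 - y.1)) :=
    ⟨R, Set.forall_mem_range.2 fun x => ciInf_le_of_le
      ⟨0, Set.forall_mem_range.2 fun _ => hnrm _⟩ 0 (by simpa using hR ⟨x.1, x.2, rfl⟩)⟩
  exact le_ciSup_of_le hbdd ⟨x, hx⟩ (le_ciInf fun y => hxL y y.2)

end KolWidth

theorem stmt0 (N k : ℕ) (hN : 0 < N) (hk : k ≤ N) :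
    kolWidth N k {x | ∑ i, |x i| ≤ 1} (fun x => Real.sqrt (∑ i, (x i) ^ 2))
      = Real.sqrt (1 - (k : ℝ) / N) := by
  have hnrm (x : Fin N → ℝ) : √(∑ i, x i ^ 2) = ‖WithLp.toLp 2 x‖ := by
    simp [EuclideanSpace.norm_eq]
  let e : EuclideanSpace ℝ (Fin N) ≃ₗ[ℝ] (Fin N → ℝ) := WithLp.linearEquiv 2 ℝ _
  apply le_antisymm
  · obtain ⟨K, hKk, hK⟩ := exists_finrank_le_forall_div_le_norm_starProjection_single_sq hk
    refine kolWidth_le_of_forall_exists (fun _ => sqrt_nonneg _) (sqrt_nonneg _)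
      (K.map (e : EuclideanSpace ℝ (Fin N) →ₗ[ℝ] Fin N → ℝ))
      (by rwa [LinearEquiv.finrank_map_eq]) fun x hx => ⟨e (K.starProjection (WithLp.toLp 2 x)),
        Submodule.mem_map_of_mem (K.starProjection_apply_mem _), ?_⟩
    rw [hnrm]
    calc _ ≤ (∑ i, |x i|) * √(1 - k / N) := K.norm_sub_starProjection_le_sum_abs_mul hK _
      _ ≤ √(1 - k / N) := mul_le_of_le_one_left (sqrt_nonneg _) hx
  · have : Nonempty (Fin N) := ⟨⟨0, hN⟩⟩
    refine le_kolWidth_of_forall_exists (fun _ => sqrt_nonneg _) ⟨1, ?_⟩ fun L hL => ?_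
    · rintro _ ⟨x, hx, rfl⟩
      exact (hnrm x).trans_le ((EuclideanSpace.norm_le_sum_abs _).trans hx)
    obtain ⟨i, hi⟩ :=
      (L.map (e.symm : (Fin N → ℝ) →ₗ[ℝ] EuclideanSpace ℝ (Fin N))).exists_sqrt_le_norm_single_sub
    rw [LinearEquiv.finrank_map_eq, Fintype.card_fin] at hi
    refine ⟨Pi.single i 1, by simp [Pi.single_apply, apply_ite], fun y hy => ?_⟩
    calc √(1 - k / N) ≤ √(1 - Module.finrank ℝ L / N) := by gcongr
      _ ≤ _ := hi _ (Submodule.mem_map_of_mem hy)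
      _ = _ := by rw [hnrm]; rfl
end

section
/- Every linear subspace L of ℝ^N with dim L ≥ N/4 contains a vector x with Euclidean norm |x| = 1 and sup norm ||x||_∞ ≥ 1/2. -/
/-!
Let `P` be the orthogonal projection onto `L` and `eᵢ` the standard basis. Since `P` is a
symmetric idempotent, `⟪eᵢ, P eᵢ⟫ = ‖P eᵢ‖²`, so `∑ᵢ ‖P eᵢ‖² = tr P = dim L ≥ N / 4` and some
`‖P eᵢ‖ ≥ 1 / 2`. The unit vector `x = P eᵢ / ‖P eᵢ‖ ∈ L` then has `i`-th coordinate
`⟪eᵢ, x⟫ = ‖P eᵢ‖ ≥ 1 / 2`.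
-/

open Finset

namespace Submodule

variable {𝕜 E ι : Type*} [RCLike 𝕜] [NormedAddCommGroup E] [InnerProductSpace 𝕜 E]

open scoped InnerProductSpace

theorem inner_starProjection_self (K : Submodule 𝕜 E) [K.HasOrthogonalProjection] (v : E) :
    ⟪v, K.starProjection v⟫_𝕜 = (‖K.starProjection v‖ : 𝕜) ^ 2 := by
  rw [← inner_self_eq_norm_sq_to_K, K.inner_starProjection_left_eq_right,
    K.starProjection_eq_self_iff.2 (K.starProjection_apply_mem v)]

theorem trace_starProjection [FiniteDimensional 𝕜 E] (K : Submodule 𝕜 E) :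
    LinearMap.trace 𝕜 E K.starProjection = Module.finrank 𝕜 K :=
  LinearMap.IsProj.trace (p := K)
    ⟨K.starProjection_apply_mem, fun _ hx => K.starProjection_eq_self_iff.2 hx⟩

theorem sum_norm_sq_starProjection_eq_finrank [Fintype ι] [FiniteDimensional 𝕜 E]
    (K : Submodule 𝕜 E) (b : OrthonormalBasis ι 𝕜 E) :
    ∑ i, ‖K.starProjection (b i)‖ ^ 2 = Module.finrank 𝕜 K := by
  have h := congrArg RCLike.re K.trace_starProjection
  rw [LinearMap.trace_eq_sum_inner _ b, map_sum] at h
  simpa only [ContinuousLinearMap.coe_coe, K.inner_starProjection_self, ← RCLike.ofReal_pow,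
    RCLike.ofReal_re, RCLike.natCast_re] using h

theorem exists_mem_norm_eq_one_inner_eq_norm_starProjection (K : Submodule 𝕜 E)
    [K.HasOrthogonalProjection] {v : E} (hv : K.starProjection v ≠ 0) :
    ∃ x ∈ K, ‖x‖ = 1 ∧ ⟪v, x⟫_𝕜 = ‖K.starProjection v‖ := by
  have hp : ‖K.starProjection v‖ ≠ 0 := norm_ne_zero_iff.2 hv
  refine ⟨(‖K.starProjection v‖⁻¹ : 𝕜) • K.starProjection v,
    K.smul_mem _ (K.starProjection_apply_mem v), ?_, ?_⟩
  · rw [norm_smul, norm_inv, RCLike.norm_ofReal, abs_norm, inv_mul_cancel₀ hp]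
  · rw [inner_smul_right, K.inner_starProjection_self]
    field_simp

theorem exists_mem_norm_eq_one_sqrt_finrank_div_card_le_norm_inner [Fintype ι] [Nonempty ι]
    [FiniteDimensional 𝕜 E] (K : Submodule 𝕜 E) (hK : 0 < Module.finrank 𝕜 K)
    (b : OrthonormalBasis ι 𝕜 E) :
    ∃ x ∈ K, ∃ i, ‖x‖ = 1 ∧ √(Module.finrank 𝕜 K / Fintype.card ι) ≤ ‖⟪b i, x⟫_𝕜‖ := by
  obtain ⟨i, -, hi⟩ : ∃ i ∈ univ,
      (Module.finrank 𝕜 K / Fintype.card ι : ℝ) ≤ ‖K.starProjection (b i)‖ ^ 2 := by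
    refine exists_le_of_sum_le univ_nonempty ?_
    rw [sum_norm_sq_starProjection_eq_finrank, sum_const, card_univ, nsmul_eq_mul,
      mul_div_cancel₀ _ (by positivity)]
  have hne : K.starProjection (b i) ≠ 0 := by
    intro h
    rw [h, norm_zero, zero_pow two_ne_zero] at hi
    exact (div_pos (by exact_mod_cast hK) (by positivity)).not_ge hi
  obtain ⟨x, hxK, hx, hbx⟩ := K.exists_mem_norm_eq_one_inner_eq_norm_starProjection hne
  refine ⟨x, hxK, i, hx, ?_⟩
  rw [hbx, RCLike.norm_ofReal, abs_norm]
  exact (Real.sqrt_le_sqrt hi).trans_eq (Real.sqrt_sq (norm_nonneg _))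
end Submodule

theorem stmt1 (N : ℕ) (hN : 0 < N) (L : Submodule ℝ (Fin N → ℝ))
    (hL : (N : ℝ) / 4 ≤ Module.finrank ℝ L) :
    ∃ x ∈ L, Real.sqrt (∑ i, (x i) ^ 2) = 1 ∧ (1 / 2 : ℝ) ≤ ⨆ i, |x i| := by
  have : NeZero N := ⟨hN.ne'⟩
  let K : Submodule ℝ (EuclideanSpace ℝ (Fin N)) :=
    L.map ((WithLp.linearEquiv 2 ℝ (Fin N → ℝ)).symm : (Fin N → ℝ) →ₗ[ℝ] _)
  have hK : Module.finrank ℝ K = Module.finrank ℝ L := LinearEquiv.finrank_map_eq _ L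
  have hquarter : (1 / 4 : ℝ) ≤ Module.finrank ℝ K / Fintype.card (Fin N) := by
    rw [hK, Fintype.card_fin, le_div_iff₀ (by positivity)]
    linarith
  obtain ⟨x, hxK, i, hx, hxi⟩ := K.exists_mem_norm_eq_one_sqrt_finrank_div_card_le_norm_inner
    (by rw [hK]; exact_mod_cast (by positivity : (0 : ℝ) < N / 4).trans_le hL)
    (EuclideanSpace.basisFun (Fin N) ℝ)
  obtain ⟨y, hyL, rfl⟩ := Submodule.mem_map.1 hxK
  refine ⟨y, hyL, by simpa [EuclideanSpace.norm_eq] using hx, ?_⟩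
  calc (1 / 2 : ℝ) = √((1 / 2) ^ 2) := (Real.sqrt_sq (by norm_num)).symm
    _ = √(1 / 4) := by norm_num
    _ ≤ √(Module.finrank ℝ K / Fintype.card (Fin N)) := Real.sqrt_le_sqrt hquarter
    _ ≤ |y i| := by rwa [EuclideanSpace.basisFun_inner, Real.norm_eq_abs] at hxi
    _ ≤ ⨆ i, |y i| := le_ciSup (f := fun i => |y i|) (Finite.bddAbove_range _) i
end

section
/- For finite-dimensional normed spaces X = (ℝ^N, ||·||_X) and Y = (ℝ^N, ||·||_Y) with unit balls B_X and B_Y, the Kolmogorov and Gelfand widths satisfy d_k(B_X, Y) = d^k(B_{Y*}, X*) for every 0 ≤ k ≤ N. -/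
open Finset

/-- `IsNorm n` : the function `n` is a norm on `ℝ^N`. -/
def IsNorm {N : ℕ} (n : (Fin N → ℝ) → ℝ) : Prop :=
  (∀ x, 0 ≤ n x) ∧ (∀ x, n x = 0 ↔ x = 0) ∧
  (∀ (a : ℝ) x, n (a • x) = |a| * n x) ∧ (∀ x y, n (x + y) ≤ n x + n y)

/-- The dual norm of `n`, via the standard pairing on `ℝ^N`. -/
noncomputable def dualNorm {N : ℕ} (n : (Fin N → ℝ) → ℝ) (y : Fin N → ℝ) : ℝ :=
  ⨆ x : {x : Fin N → ℝ // n x ≤ 1}, ∑ i, x.1 i * y i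

/-- Gelfand width of `M` in `ℝ^N` with respect to the norm `nrm`. -/
noncomputable def gelWidth (N : ℕ) (k : ℕ) (M : Set (Fin N → ℝ))
    (nrm : (Fin N → ℝ) → ℝ) : ℝ :=
  ⨅ L : {L : Submodule ℝ (Fin N → ℝ) // N ≤ k + Module.finrank ℝ L},
    ⨆ x : {x : Fin N → ℝ // x ∈ M ∧ x ∈ L.1}, nrm x.1

/-! For a subspace `L`, Hahn–Banach gives the distance formula
`dist_Y(x, L) = sup {⟨x, z⟩ | z ∈ B_{Y*} ∩ L^⊥}`. Taking the supremum over `x ∈ B_X` and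
exchanging the two suprema turns `sup_{x ∈ B_X} dist_Y(x, L)` into
`sup {‖z‖_{X*} | z ∈ B_{Y*} ∩ L^⊥}`. Since `L ↦ L^⊥` is an involution exchanging the subspaces of
dimension `≤ k` with those of codimension `≤ k`, the infima defining the two widths agree. -/

open Matrix

theorem ciSup_ciSup_le_of_bddAbove {α ι κ : Type*} [ConditionallyCompleteLattice α]
    [Nonempty ι] [Nonempty κ] {f : ι → κ → α} (hf : BddAbove (Set.range (Function.uncurry f))) :
    ⨆ i, ⨆ j, f i j ≤ ⨆ j, ⨆ i, f i j := by
  obtain ⟨C, hC⟩ := hf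
  have hle : ∀ i j, f i j ≤ C := fun i j => hC ⟨(i, j), rfl⟩
  refine ciSup_le fun i => ciSup_le fun j => ?_
  exact (le_ciSup ⟨C, Set.forall_mem_range.2 (hle · j)⟩ i).trans
    (le_ciSup ⟨C, Set.forall_mem_range.2 fun j => ciSup_le (hle · j)⟩ j)

theorem ciSup_comm_of_bddAbove {α ι κ : Type*} [ConditionallyCompleteLattice α]
    [Nonempty ι] [Nonempty κ] {f : ι → κ → α} (hf : BddAbove (Set.range (Function.uncurry f))) :
    ⨆ i, ⨆ j, f i j = ⨆ j, ⨆ i, f i j := by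
  refine le_antisymm (ciSup_ciSup_le_of_bddAbove hf) (ciSup_ciSup_le_of_bddAbove ?_)
  refine hf.mono ?_
  rintro _ ⟨⟨j, i⟩, rfl⟩
  exact ⟨(i, j), rfl⟩

namespace Seminorm

section FiniteDimensional

variable {E : Type*} [NormedAddCommGroup E] [NormedSpace ℝ E] [FiniteDimensional ℝ E]

theorem continuous_of_finiteDimensional (p : Seminorm ℝ E) : Continuous p :=
  continuousOn_univ.1 (p.convexOn.continuousOn isOpen_univ)

theorem exists_pos_mul_norm_le (p : Seminorm ℝ E) (hp : ∀ x, p x = 0 → x = 0) :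
    ∃ c > 0, ∀ x, c * ‖x‖ ≤ p x := by
  cases subsingleton_or_nontrivial E with
  | inl _ => exact ⟨1, one_pos, fun x => by simp [Subsingleton.elim x 0]⟩
  | inr _ =>
    obtain ⟨u, hu, hmin⟩ := (isCompact_sphere (0 : E) 1).exists_isMinOn
      (NormedSpace.sphere_nonempty.2 zero_le_one) p.continuous_of_finiteDimensional.continuousOn
    have hu0 : u ≠ 0 := ne_zero_of_mem_unit_sphere ⟨u, hu⟩
    refine ⟨p u, (apply_nonneg p u).lt_of_ne' fun h => hu0 (hp u h), fun x => ?_⟩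
    rcases eq_or_ne x 0 with rfl | hx
    · simp
    · have hux : p u ≤ p (‖x‖⁻¹ • x) := hmin (by simp [norm_smul, hx])
      rw [map_smul_eq_mul, norm_inv, norm_norm, le_inv_mul_iff₀ (norm_pos_iff.2 hx)] at hux
      linarith

theorem isCompact_setOf_le (p : Seminorm ℝ E) (hp : ∀ x, p x = 0 → x = 0) (r : ℝ) :
    IsCompact {x | p x ≤ r} := by
  obtain ⟨c, hc, hcp⟩ := p.exists_pos_mul_norm_le hp
  refine Metric.isCompact_of_isClosed_isBounded
    (isClosed_le p.continuous_of_finiteDimensional continuous_const) ?_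
  refine (Metric.isBounded_closedBall (x := 0) (r := r / c)).subset fun x hx => ?_
  rw [mem_closedBall_zero_iff, le_div_iff₀' hc]
  exact (hcp x).trans hx

end FiniteDimensional

section InfDist

variable {𝕜 E : Type*} [NormedField 𝕜] [AddCommGroup E] [Module 𝕜 E]
  (p : Seminorm 𝕜 E) (L : Submodule 𝕜 E)

theorem bddBelow_range_apply_sub (x : E) : BddBelow (Set.range fun y : L => p (x - y)) :=
  ⟨0, Set.forall_mem_range.2 fun _ => apply_nonneg _ _⟩

noncomputable def infDist : Seminorm 𝕜 E :=
  Seminorm.ofSMulLE (fun x => ⨅ y : L, p (x - y))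
    (le_antisymm ((ciInf_le (p.bddBelow_range_apply_sub L 0) 0).trans_eq (by simp))
      (le_ciInf fun _ => apply_nonneg _ _))
    (fun v w => le_ciInf_add_ciInf fun y₁ y₂ =>
      (ciInf_le (p.bddBelow_range_apply_sub L _) (y₁ + y₂)).trans <| by
        simpa only [Submodule.coe_add, add_sub_add_comm] using map_add_le_add p (v - y₁) (w - y₂))
    (fun r x => by
      rw [Real.mul_iInf_of_nonneg (norm_nonneg r)]
      refine le_ciInf fun y => (ciInf_le (p.bddBelow_range_apply_sub L _) (r • y)).trans_eq ?_
      rw [Submodule.coe_smul, ← smul_sub, map_smul_eq_mul])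

variable {p L}

theorem infDist_le_apply_sub (x : E) {y : E} (hy : y ∈ L) : p.infDist L x ≤ p (x - y) :=
  ciInf_le (p.bddBelow_range_apply_sub L x) ⟨y, hy⟩

theorem infDist_le_apply (x : E) : p.infDist L x ≤ p x := by
  simpa using infDist_le_apply_sub x L.zero_mem

theorem infDist_eq_zero_of_mem {x : E} (hx : x ∈ L) : p.infDist L x = 0 :=
  le_antisymm (by simpa using infDist_le_apply_sub x hx) (apply_nonneg _ _)

end InfDist

section Dual

variable {E : Type*} [AddCommGroup E] [Module ℝ E]

theorem exists_dual_le_eq (q : Seminorm ℝ E) (x : E) :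
    ∃ g : Module.Dual ℝ E, (∀ v, g v ≤ q v) ∧ g x = q x := by
  rcases eq_or_ne x 0 with rfl | hx
  · exact ⟨0, fun v => apply_nonneg q v, by simp⟩
  set f := (LinearPMap.mkSpanSingleton (σ := RingHom.id ℝ) x (q x) hx).toFun
  have hfq : ∀ v, f v ≤ q v := by
    rintro ⟨v, hv⟩
    obtain ⟨c, rfl⟩ := Submodule.mem_span_singleton.1 hv
    calc f ⟨c • x, hv⟩ = c * q x := LinearPMap.mkSpanSingleton'_apply _ _ _ c hv
      _ ≤ |c| * q x := mul_le_mul_of_nonneg_right (le_abs_self c) (apply_nonneg q x)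
      _ = q (c • x) := (map_smul_eq_mul q c x).symm
  obtain ⟨g, hgx, hgq⟩ := Module.Dual.exists_extension_of_le_seminorm_real _ f hfq
  refine ⟨g, fun v => (le_abs_self _).trans (hgq v), ?_⟩
  exact (hgx ⟨x, Submodule.mem_span_singleton_self x⟩).trans
    (LinearPMap.mkSpanSingleton_apply ℝ ℝ hx _)

theorem exists_dual_le_infDist_eq (p : Seminorm ℝ E) (L : Submodule ℝ E) (x : E) :
    ∃ g : Module.Dual ℝ E, (∀ v, g v ≤ p v) ∧ (∀ y ∈ L, g y = 0) ∧ g x = p.infDist L x := by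
  obtain ⟨g, hgq, hgx⟩ := (p.infDist L).exists_dual_le_eq x
  refine ⟨g, fun v => (hgq v).trans (infDist_le_apply v), fun y hy => ?_, hgx⟩
  have h₁ : g y ≤ 0 := (hgq y).trans_eq (infDist_eq_zero_of_mem hy)
  have h₂ : g (-y) ≤ 0 := (hgq _).trans_eq (infDist_eq_zero_of_mem (L.neg_mem hy))
  rw [map_neg] at h₂
  linarith

end Dual

end Seminorm

section DotOrthogonal

variable {K ι : Type*} [Field K] [Fintype ι]

theorem nondegenerate_dotProductBilin :
    (dotProductBilin K K : LinearMap.BilinForm K (ι → K)).Nondegenerate :=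
  ⟨fun x hx => dotProduct_eq_zero x hx,
    fun y hy => dotProduct_eq_zero y fun x => by rw [dotProduct_comm]; exact hy x⟩

namespace Submodule

/-- The annihilator `L^⊥ ⊆ X*` of `L ⊆ X`, with `X* = ι → K` through the standard pairing. -/
noncomputable def dotOrthogonal (L : Submodule K (ι → K)) : Submodule K (ι → K) :=
  LinearMap.BilinForm.orthogonal (dotProductBilin K K) L

theorem mem_dotOrthogonal {L : Submodule K (ι → K)} {z : ι → K} :
    z ∈ dotOrthogonal L ↔ ∀ y ∈ L, y ⬝ᵥ z = 0 :=
  LinearMap.BilinForm.mem_orthogonal_iff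

theorem finrank_dotOrthogonal (L : Submodule K (ι → K)) :
    Module.finrank K (dotOrthogonal L) = Fintype.card ι - Module.finrank K L := by
  rw [dotOrthogonal, LinearMap.BilinForm.finrank_orthogonal nondegenerate_dotProductBilin,
    Module.finrank_fintype_fun_eq_card]

theorem dotOrthogonal_dotOrthogonal (L : Submodule K (ι → K)) :
    dotOrthogonal (dotOrthogonal L) = L :=
  LinearMap.BilinForm.orthogonal_orthogonal nondegenerate_dotProductBilin
    (fun x y h => by rwa [dotProductBilin_apply_apply, dotProduct_comm] at h) L

end Submodule

end DotOrthogonal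

namespace IsNorm

variable {N : ℕ} {n : (Fin N → ℝ) → ℝ}

def toSeminorm (h : IsNorm n) : Seminorm ℝ (Fin N → ℝ) :=
  Seminorm.of n h.2.2.2 h.2.2.1

theorem continuous (h : IsNorm n) : Continuous n :=
  h.toSeminorm.continuous_of_finiteDimensional

theorem isCompact_setOf_le_one (h : IsNorm n) : IsCompact {x | n x ≤ 1} :=
  h.toSeminorm.isCompact_setOf_le (fun x => (h.2.1 x).1) 1

theorem nonempty_setOf_le_one (h : IsNorm n) : Nonempty {x // n x ≤ 1} :=
  ⟨⟨0, by simp [(h.2.1 0).2 rfl]⟩⟩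

theorem bddAbove_range_dotProduct (h : IsNorm n) (z : Fin N → ℝ) :
    BddAbove (Set.range fun x : {x // n x ≤ 1} => x.1 ⬝ᵥ z) := by
  have := h.isCompact_setOf_le_one.bddAbove_image (f := (· ⬝ᵥ z)) (by fun_prop)
  rw [Set.image_eq_range] at this
  exact this

theorem dualNorm_eq_iSup (z : Fin N → ℝ) :
    dualNorm n z = ⨆ x : {x // n x ≤ 1}, x.1 ⬝ᵥ z := rfl

theorem dualNorm_zero (h : IsNorm n) : dualNorm n 0 = 0 := by
  have := h.nonempty_setOf_le_one
  simp [dualNorm_eq_iSup]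

theorem dualNorm_le_one (h : IsNorm n) {z : Fin N → ℝ} (hz : ∀ w, w ⬝ᵥ z ≤ n w) :
    dualNorm n z ≤ 1 :=
  have := h.nonempty_setOf_le_one
  ciSup_le fun x => (hz x.1).trans x.2

theorem dotProduct_le_mul_dualNorm (h : IsNorm n) (w z : Fin N → ℝ) :
    w ⬝ᵥ z ≤ n w * dualNorm n z := by
  rcases (h.1 w).eq_or_lt with hw | hw
  · obtain rfl := (h.2.1 w).1 hw.symm
    simp [← hw]
  have hunit : n ((n w)⁻¹ • w) ≤ 1 := by
    rw [h.2.2.1, abs_inv, abs_of_pos hw, inv_mul_cancel₀ hw.ne']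
  have := le_ciSup (h.bddAbove_range_dotProduct z) ⟨_, hunit⟩
  rw [smul_dotProduct, smul_eq_mul, inv_mul_le_iff₀ hw] at this
  exact this

theorem nonempty_dualNorm_le_one_and_mem (h : IsNorm n) (L : Submodule ℝ (Fin N → ℝ)) :
    Nonempty {z // dualNorm n z ≤ 1 ∧ z ∈ L.dotOrthogonal} :=
  ⟨⟨0, h.dualNorm_zero.trans_le zero_le_one, zero_mem _⟩⟩

theorem dotProduct_le_infDist (h : IsNorm n) {L : Submodule ℝ (Fin N → ℝ)} {z : Fin N → ℝ}
    (hz : dualNorm n z ≤ 1) (hzL : z ∈ L.dotOrthogonal) (x : Fin N → ℝ) :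
    x ⬝ᵥ z ≤ h.toSeminorm.infDist L x :=
  le_ciInf fun y => calc
    x ⬝ᵥ z = (x - y.1) ⬝ᵥ z := by
      rw [sub_dotProduct, Submodule.mem_dotOrthogonal.1 hzL y y.2, sub_zero]
    _ ≤ n (x - y) * dualNorm n z := h.dotProduct_le_mul_dualNorm _ _
    _ ≤ n (x - y) := mul_le_of_le_one_right (h.1 _) hz

theorem infDist_eq_iSup_dotProduct (h : IsNorm n) (L : Submodule ℝ (Fin N → ℝ))
    (x : Fin N → ℝ) :
    h.toSeminorm.infDist L x = ⨆ z : {z // dualNorm n z ≤ 1 ∧ z ∈ L.dotOrthogonal}, x ⬝ᵥ z.1 := by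
  have := h.nonempty_dualNorm_le_one_and_mem L
  refine le_antisymm ?_ (ciSup_le fun z => h.dotProduct_le_infDist z.2.1 z.2.2 x)
  obtain ⟨g, hgn, hgL, hgx⟩ := h.toSeminorm.exists_dual_le_infDist_eq L x
  obtain ⟨z, rfl⟩ := (dotProductEquiv ℝ (Fin N)).surjective g
  simp only [dotProductEquiv_apply_apply] at hgn hgL hgx
  have hz : dualNorm n z ≤ 1 :=
    h.dualNorm_le_one fun w => (dotProduct_comm w z).trans_le (hgn w)
  have hzL : z ∈ L.dotOrthogonal :=
    Submodule.mem_dotOrthogonal.2 fun y hy => (dotProduct_comm y z).trans (hgL y hy)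
  rw [← hgx, dotProduct_comm]
  exact le_ciSup ⟨_, Set.forall_mem_range.2 fun z => h.dotProduct_le_infDist z.2.1 z.2.2 x⟩
    (⟨z, hz, hzL⟩ : {z // dualNorm n z ≤ 1 ∧ z ∈ L.dotOrthogonal})

theorem iSup_infDist_eq_iSup_dualNorm {nX nY : (Fin N → ℝ) → ℝ} (hX : IsNorm nX)
    (hY : IsNorm nY) (L : Submodule ℝ (Fin N → ℝ)) :
    ⨆ x : {x // nX x ≤ 1}, hY.toSeminorm.infDist L x =
      ⨆ z : {z // dualNorm nY z ≤ 1 ∧ z ∈ L.dotOrthogonal}, dualNorm nX z := by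
  have := hX.nonempty_setOf_le_one
  have := hY.nonempty_dualNorm_le_one_and_mem L
  obtain ⟨C, hC⟩ := hX.isCompact_setOf_le_one.bddAbove_image hY.continuous.continuousOn
  simp only [hY.infDist_eq_iSup_dotProduct L]
  refine ciSup_comm_of_bddAbove ⟨C, ?_⟩
  rintro _ ⟨⟨x, z⟩, rfl⟩
  exact (hY.dotProduct_le_infDist z.2.1 z.2.2 x).trans
    ((Seminorm.infDist_le_apply x.1).trans (hC ⟨x, x.2, rfl⟩))

end IsNorm

noncomputable def Submodule.dotOrthogonalEquiv (N k : ℕ) :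
    {L : Submodule ℝ (Fin N → ℝ) // Module.finrank ℝ L ≤ k} ≃
      {L : Submodule ℝ (Fin N → ℝ) // N ≤ k + Module.finrank ℝ L} where
  toFun L := ⟨L.1.dotOrthogonal, by
    have := L.1.finrank_le
    rw [Module.finrank_fin_fun] at this
    rw [finrank_dotOrthogonal, Fintype.card_fin]
    omega⟩
  invFun L := ⟨L.1.dotOrthogonal, by
    rw [finrank_dotOrthogonal, Fintype.card_fin]
    omega⟩
  left_inv L := Subtype.ext L.1.dotOrthogonal_dotOrthogonal
  right_inv L := Subtype.ext L.1.dotOrthogonal_dotOrthogonal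

theorem stmt12_general (N k : ℕ)
    (nX nY : (Fin N → ℝ) → ℝ) (hX : IsNorm nX) (hY : IsNorm nY) :
    kolWidth N k {x | nX x ≤ 1} nY
      = gelWidth N k {x | dualNorm nY x ≤ 1} (dualNorm nX) :=
  (Submodule.dotOrthogonalEquiv N k).iInf_congr fun L =>
    (hX.iSup_infDist_eq_iSup_dualNorm hY L.1).symm

/-- Duality between Kolmogorov and Gelfand widths:
`d_k(B_X, Y) = d^k(B_{Y*}, X*)`. -/
theorem stmt12 (N k : ℕ) (hk : k ≤ N)
    (nX nY : (Fin N → ℝ) → ℝ) (hX : IsNorm nX) (hY : IsNorm nY) :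
    kolWidth N k {x | nX x ≤ 1} nY
      = gelWidth N k {x | dualNorm nY x ≤ 1} (dualNorm nX) :=
  stmt12_general N k nX nY hX hY
end
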